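/- Let α ∈ (0, π/2) and l₂ > 0 be real numbers, and for 0 < l₁ < l₂ set τ(l₁) = π sin α · sqrt( 2 (l₂² − l₁²) ) / sqrt( log(l₂/l₁) ) and define the geometrically regularized torsion Υ(l₁) = τ(l₁) · sqrt( l₂ · log(l₂/l₁) ) / sqrt( 2π l₂ sin α ). Then Υ(l₁) = sqrt( π (l₂² − l₁²) sin α ) for every 0 < l₁ < l₂, and lim_{l₁ → 0⁺} Υ(l₁) = sqrt( π l₂² sin α ). -/

import Mathlib

open Real Filter

theorem mul_sqrt_div_sqrt_mul_div_sqrt_eq {p s l L A : ℝ} (hp : 0 < p) (hs : 0 < s) (hl : 0 < l)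
    (hL : 0 < L) :
    p * s * √(2 * A) / √L * √(l * L) / √(2 * p * l * s) = √(p * A * s) := by
  rw [← sqrt_sq (by positivity : 0 ≤ p * s), ← sqrt_mul (by positivity),
    ← sqrt_div' _ hL.le, ← sqrt_mul' _ (by positivity), ← sqrt_div' _ (by positivity)]
  congr 1
  field_simp

/-- For `α ∈ (0, π/2)`, `l₂ > 0` and `0 < l₁ < l₂`, let
`τ(l₁) = π sin α √(2(l₂² − l₁²))/√(log(l₂/l₁))` be the Reidemeister torsion of
the frustum and
`Υ(l₁) = τ(l₁) √(l₂ log(l₂/l₁)) / √(2π l₂ sin α)` the geometrically regularized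
torsion.  Then `Υ(l₁) = √(π (l₂² − l₁²) sin α)` for every `0 < l₁ < l₂`, and
`lim_{l₁→0⁺} Υ(l₁) = √(π l₂² sin α)`. -/
theorem statement_9 (α l₂ : ℝ) (hα : α ∈ Set.Ioo 0 (π / 2)) (hl₂ : 0 < l₂) :
    (∀ l₁ : ℝ, 0 < l₁ → l₁ < l₂ →
      (π * Real.sin α * Real.sqrt (2 * (l₂ ^ 2 - l₁ ^ 2)) / Real.sqrt (Real.log (l₂ / l₁))) *
          Real.sqrt (l₂ * Real.log (l₂ / l₁)) / Real.sqrt (2 * π * l₂ * Real.sin α) =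
        Real.sqrt (π * (l₂ ^ 2 - l₁ ^ 2) * Real.sin α)) ∧
    Tendsto
      (fun l₁ : ℝ =>
        (π * Real.sin α * Real.sqrt (2 * (l₂ ^ 2 - l₁ ^ 2)) / Real.sqrt (Real.log (l₂ / l₁))) *
          Real.sqrt (l₂ * Real.log (l₂ / l₁)) / Real.sqrt (2 * π * l₂ * Real.sin α))
      (nhdsWithin 0 (Set.Ioo 0 l₂))
      (nhds (Real.sqrt (π * l₂ ^ 2 * Real.sin α))) := by
  have hsin : 0 < sin α := sin_pos_of_pos_of_lt_pi hα.1 (by linarith [hα.2, pi_pos])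
  have hΥ : ∀ l₁ : ℝ, 0 < l₁ → l₁ < l₂ →
      (π * sin α * √(2 * (l₂ ^ 2 - l₁ ^ 2)) / √(log (l₂ / l₁))) *
          √(l₂ * log (l₂ / l₁)) / √(2 * π * l₂ * sin α) = √(π * (l₂ ^ 2 - l₁ ^ 2) * sin α) :=
    fun l₁ hl₁ hl₁₂ => mul_sqrt_div_sqrt_mul_div_sqrt_eq pi_pos hsin hl₂
      (log_pos ((one_lt_div hl₁).2 hl₁₂))
  refine ⟨hΥ, ?_⟩
  have hcont : ContinuousAt (fun l₁ : ℝ => √(π * (l₂ ^ 2 - l₁ ^ 2) * sin α)) 0 := by fun_prop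
  refine Tendsto.congr' ?_ (tendsto_nhdsWithin_of_tendsto_nhds (by simpa using hcont.tendsto))
  filter_upwards [self_mem_nhdsWithin] with l₁ hl₁
  exact (hΥ l₁ hl₁.1 hl₁.2).symm
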